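/- For every i ≥ 1, if α₁, …, α_i are the complex roots (with multiplicity) of the degree-i monic polynomial a_i(t), then ∏_{j=1}^{i} a_{i−1}(α_j) = (−1)^{i(i−1)/2}. -/

import Mathlib

open Polynomial

noncomputable def aSeq : ℕ → Polynomial ℂ
  | 0 => 1
  | 1 => X - 1
  | (k + 2) => (X - 2) * aSeq (k + 1) - aSeq k

/-!
Write `P n = ∏_{a_{n+1}(α) = 0} a_n(α)`. Via the resultant, `P n` equals, up to the sign
`(-1)^{n(n+1)} = 1`, the product of `a_{n+1}` over the roots of `a_n`; at those roots the
recurrence gives `a_{n+1} = -a_{n-1}`, so `P n = (-1)^n P (n-1)`, and `P 0 = a_0(1) = 1`.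
-/

namespace Polynomial

variable {R : Type*} [CommRing R] [IsDomain R]

theorem Monic.prod_roots_eval_eq_neg_one_pow_mul {f g : R[X]} (hf : f.Monic) (hg : g.Monic)
    (hfs : f.Splits) (hgs : g.Splits) :
    (f.roots.map g.eval).prod
      = (-1) ^ (f.natDegree * g.natDegree) * (g.roots.map f.eval).prod := by
  have hfg := resultant_eq_prod_eval f g g.natDegree le_rfl hfs
  have hgf := resultant_eq_prod_eval g f f.natDegree le_rfl hgs
  rw [hf.leadingCoeff, one_pow, one_mul] at hfg
  rw [hg.leadingCoeff, one_pow, one_mul] at hgf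
  rw [← hfg, ← hgf, resultant_comm]

end Polynomial

theorem aSeq_add_two (k : ℕ) : aSeq (k + 2) = (X - C 2) * aSeq (k + 1) - aSeq k := by
  rw [aSeq, ← map_ofNat C 2]

theorem aSeq_monic_and_natDegree : ∀ k, (aSeq k).Monic ∧ (aSeq k).natDegree = k
  | 0 => ⟨monic_one, natDegree_one⟩
  | 1 => ⟨monic_X_sub_C 1, natDegree_X_sub_C 1⟩
  | (k + 2) => by
    obtain ⟨h₁m, h₁d⟩ := aSeq_monic_and_natDegree (k + 1)
    obtain ⟨h₀m, h₀d⟩ := aSeq_monic_and_natDegree k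
    have hm : ((X - C 2) * aSeq (k + 1)).Monic := (monic_X_sub_C 2).mul h₁m
    have hd : ((X - C 2) * aSeq (k + 1)).natDegree = k + 2 := by
      rw [(monic_X_sub_C 2).natDegree_mul h₁m, natDegree_X_sub_C, h₁d, add_comm]
    have hlt : (aSeq k).natDegree < ((X - C 2) * aSeq (k + 1)).natDegree := by omega
    rw [aSeq_add_two]
    exact ⟨hm.sub_of_left (degree_lt_degree hlt), hd ▸ natDegree_sub_eq_left_of_natDegree_lt hlt⟩

theorem aSeq_monic (k : ℕ) : (aSeq k).Monic := (aSeq_monic_and_natDegree k).1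

theorem aSeq_natDegree (k : ℕ) : (aSeq k).natDegree = k := (aSeq_monic_and_natDegree k).2

theorem card_roots_aSeq (k : ℕ) : Multiset.card (aSeq k).roots = k := by
  rw [← (IsAlgClosed.splits (aSeq k)).natDegree_eq_card_roots, aSeq_natDegree]

theorem eval_aSeq_add_two_of_isRoot {k : ℕ} {x : ℂ} (hx : (aSeq (k + 1)).IsRoot x) :
    (aSeq (k + 2)).eval x = -(aSeq k).eval x := by
  rw [aSeq_add_two, eval_sub, eval_mul, hx.eq_zero, mul_zero, zero_sub]

theorem prod_roots_aSeq_succ_eval_aSeq (n : ℕ) :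
    ((aSeq (n + 1)).roots.map (aSeq n).eval).prod = (-1) ^ ((n + 1) * n / 2) := by
  induction n with
  | zero => simp [aSeq]
  | succ n ih =>
    have hswap := (aSeq_monic (n + 2)).prod_roots_eval_eq_neg_one_pow_mul (aSeq_monic (n + 1))
      (IsAlgClosed.splits _) (IsAlgClosed.splits _)
    have hrec : (aSeq (n + 1)).roots.map (aSeq (n + 2)).eval
        = ((aSeq (n + 1)).roots.map (aSeq n).eval).map Neg.neg := by
      rw [Multiset.map_map]
      exact Multiset.map_congr rfl fun x hx =>
        eval_aSeq_add_two_of_isRoot (isRoot_of_mem_roots hx)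
    have hsign : Even ((n + 2) * (n + 1)) := mul_comm (n + 1) (n + 2) ▸ Nat.even_mul_succ_self _
    have hexp : (n + 1 + 1) * (n + 1) / 2 = (n + 1) * n / 2 + (n + 1) := by
      rw [show (n + 1 + 1) * (n + 1) = (n + 1) * n + (n + 1) * 2 by ring,
        Nat.add_mul_div_right _ _ two_pos]
    rw [hswap, hrec, Multiset.prod_map_neg, Multiset.card_map, card_roots_aSeq, ih,
      aSeq_natDegree, aSeq_natDegree, hsign.neg_one_pow, one_mul,
      hexp, ← pow_add, add_comm]

theorem prod_a_pred_over_roots_a_general (i : ℕ) :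
    ((aSeq i).roots.map fun α => (aSeq (i - 1)).eval α).prod
      = (-1) ^ (i * (i - 1) / 2) := by
  cases i with
  | zero => simp [aSeq]
  | succ n => exact prod_roots_aSeq_succ_eval_aSeq n

theorem prod_a_pred_over_roots_a (i : ℕ) (hi : 1 ≤ i) :
    ((aSeq i).roots.map fun α => (aSeq (i - 1)).eval α).prod
      = (-1) ^ (i * (i - 1) / 2) :=
  prod_a_pred_over_roots_a_general i
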